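/- arXiv:0809.0658 — 2 statements merged into one kernel-verified Lean document; each statement's English description precedes it below -/
import Mathlib

section
/- Assume limsup_{n→∞} n⁴ a_n = ∞. Then for every integer k ≥ 1, the operator Lᵏ does not act continuously on the space of bounded variation functions: for every constant C > 0 there exists f : [0,1) → ℝ of bounded variation with Var(f) ≤ 2 and sup_{x∈[0,1)} |f(x)| ≤ 1 such that Var(Lᵏ f) > C. -/
/-!
Write `s = |J|/N` and `ψ = u_1`, so that `ψ^K [0,1)` is an interval of length `s^K`. Take for `f`
the indicator of `v_n(ψ^K [0,1))`: its variation is at most `2`. Among the inverse branches only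
`v_n` meets the support of `f`, and afterwards only `u_1` meets the support of each iterate, so
`L^{K+1} f = s^K · v_n' ∘ ψ^K` on `[0,1)`. Since `v_n' = a_n (2 + cos (4π n⁴ t))` makes about
`4 n⁴ s^K` half-oscillations of height `2 a_n` on `ψ^K [0,1)`, the variation of `L^{K+1} f` is at
least `s^K a_n (8 n⁴ s^K - 4)`, which is unbounded along a sequence with `n⁴ a_n → ∞`.
-/

open MeasureTheory Set Filter

noncomputable section

namespace Gouezel

/-- `b a n = 4 * ∑_{k=1}^n a_k` (left endpoints of the intervals `I_n`). -/
def b (a : ℕ → ℝ) (n : ℕ) : ℝ := 4 * ∑ k ∈ Finset.range n, a (k + 1)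

/-- `b_∞ = 4 * ∑_{n=1}^∞ a_n`. -/
def binf (a : ℕ → ℝ) : ℝ := 4 * ∑' n : ℕ, a (n + 1)

/-- The length `|J| = 1 - b_∞` of the interval `J = [b_∞, 1)`. -/
def lenJ (a : ℕ → ℝ) : ℝ := 1 - binf a

/-- `v_n'(x) = a_n (1 + 2 cos²(2π n⁴ x))`. -/
def vd (a : ℕ → ℝ) (n : ℕ) (x : ℝ) : ℝ :=
  a n * (1 + 2 * Real.cos (2 * Real.pi * (n : ℝ) ^ 4 * x) ^ 2)

/-- `w_n'(x) = a_n (1 + 2 sin²(2π n⁴ x))`. -/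
def wd (a : ℕ → ℝ) (n : ℕ) (x : ℝ) : ℝ :=
  a n * (1 + 2 * Real.sin (2 * Real.pi * (n : ℝ) ^ 4 * x) ^ 2)

/-- The inverse branch `v_n(x) = b_{n-1} + ∫_0^x v_n'(t) dt`. -/
def v (a : ℕ → ℝ) (n : ℕ) (x : ℝ) : ℝ := b a (n - 1) + ∫ t in (0:ℝ)..x, vd a n t

/-- The inverse branch `w_n(x) = b_{n-1} + 2 a_n + ∫_0^x w_n'(t) dt`. -/
def w (a : ℕ → ℝ) (n : ℕ) (x : ℝ) : ℝ :=
  b a (n - 1) + 2 * a n + ∫ t in (0:ℝ)..x, wd a n t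

/-- The affine inverse branches `u_j(x) = b_∞ + (j-1)|J|/N + (|J|/N) x`, `1 ≤ j ≤ N`. -/
def u (a : ℕ → ℝ) (N : ℕ) (j : ℕ) (x : ℝ) : ℝ :=
  binf a + ((j : ℝ) - 1) * (lenJ a / N) + (lenJ a / N) * x

/-- The transfer operator on complex-valued functions. -/
def L (a : ℕ → ℝ) (N : ℕ) (f : ℝ → ℂ) (x : ℝ) : ℂ :=
  (∑' n : ℕ, ((vd a (n + 1) x : ℂ) * f (v a (n + 1) x)
      + (wd a (n + 1) x : ℂ) * f (w a (n + 1) x)))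
    + ((lenJ a / (N : ℝ) : ℝ) : ℂ) * ∑ j ∈ Finset.range N, f (u a N (j + 1) x)

/-- The transfer operator on real-valued functions. -/
def LR (a : ℕ → ℝ) (N : ℕ) (f : ℝ → ℝ) (x : ℝ) : ℝ :=
  (∑' n : ℕ, (vd a (n + 1) x * f (v a (n + 1) x) + wd a (n + 1) x * f (w a (n + 1) x)))
    + (lenJ a / N) * ∑ j ∈ Finset.range N, f (u a N (j + 1) x)

/-- The part `L_n` of the transfer operator coming from the branches `v_n, w_n`. -/
def Ln (a : ℕ → ℝ) (n : ℕ) (f : ℝ → ℂ) (x : ℝ) : ℂ :=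
  (vd a n x : ℂ) * f (v a n x) + (wd a n x : ℂ) * f (w a n x)

/-- Sup norm of `f` on `[0,1)`. -/
def supNorm (f : ℝ → ℂ) : ℝ := ⨆ x : Ico (0:ℝ) 1, ‖f x.1‖

/-- Best Lipschitz constant of `f` on `[0,1)` (the term at `x = y` is `0/0 = 0`). -/
def lipConst (f : ℝ → ℂ) : ℝ :=
  ⨆ p : Ico (0:ℝ) 1 × Ico (0:ℝ) 1, ‖f p.1.1 - f p.2.1‖ / |p.1.1 - p.2.1|

/-- Lipschitz norm `‖f‖_Lip = sup|f| + Lip(f)` on `[0,1)`. -/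
def lipNorm (f : ℝ → ℂ) : ℝ := supNorm f + lipConst f

/-- `f` is bounded and Lipschitz on `[0,1)`. -/
def BddLip (f : ℝ → ℂ) : Prop :=
  ∃ K : ℝ, (∀ x ∈ Ico (0:ℝ) 1, ‖f x‖ ≤ K) ∧
    ∀ x ∈ Ico (0:ℝ) 1, ∀ y ∈ Ico (0:ℝ) 1, ‖f x - f y‖ ≤ K * |x - y|

/-- The specific choice `a_n = 1/(100 n³)`. -/
def aa (n : ℕ) : ℝ := 1 / (100 * (n : ℝ) ^ 3)

/-- Standing hypotheses on the sequence `(a_n)`: positivity and `∑ a_n < 1/4`. -/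
def StdHyp (a : ℕ → ℝ) : Prop :=
  (∀ n : ℕ, 1 ≤ n → 0 < a n) ∧ Summable (fun n : ℕ => a (n + 1)) ∧
    (∑' n : ℕ, a (n + 1)) < 1 / 4

/-- `T : [0,1) → [0,1)` has the maps `v_n, w_n` (`n ≥ 1`) and `u_j` (`1 ≤ j ≤ N`)
as inverse branches. -/
def InverseBranches (a : ℕ → ℝ) (N : ℕ) (T : ℝ → ℝ) : Prop :=
  MapsTo T (Ico (0:ℝ) 1) (Ico (0:ℝ) 1) ∧
    ∀ x ∈ Ico (0:ℝ) 1,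
      (∀ n : ℕ, 1 ≤ n → T (v a n x) = x ∧ T (w a n x) = x) ∧
      (∀ j : ℕ, 1 ≤ j → j ≤ N → T (u a N j x) = x)

section Variation

variable {α E F : Type*} [LinearOrder α]

lemma eVariationOn_sub_le [SeminormedAddCommGroup E] (f g : α → E) (s : Set α) :
    eVariationOn (f - g) s ≤ eVariationOn f s + eVariationOn g s := by
  refine iSup_le fun ⟨m, p, hp, hps⟩ => ?_
  calc ∑ i ∈ Finset.range m, edist ((f - g) (p (i + 1))) ((f - g) (p i))
      ≤ ∑ i ∈ Finset.range m,
          (edist (f (p (i + 1))) (f (p i)) + edist (g (p (i + 1))) (g (p i))) := by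
        gcongr with i
        simp only [Pi.sub_apply, edist_dist]
        rw [← ENNReal.ofReal_add dist_nonneg dist_nonneg]
        exact ENNReal.ofReal_le_ofReal (dist_sub_sub_le _ _ _ _)
    _ ≤ eVariationOn f s + eVariationOn g s := by
        rw [Finset.sum_add_distrib]
        exact add_le_add (eVariationOn.sum_le hp hps) (eVariationOn.sum_le hp hps)

lemma eVariationOn_comp_of_edist_eq [PseudoEMetricSpace E] [PseudoEMetricSpace F] {Φ : E → F}
    {c : ENNReal} (hΦ : ∀ x y, edist (Φ x) (Φ y) = c * edist x y) (f : α → E) (s : Set α) :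
    eVariationOn (Φ ∘ f) s = c * eVariationOn f s := by
  simp only [eVariationOn, Function.comp_apply, hΦ, ← Finset.mul_sum, ENNReal.mul_iSup]

lemma edist_const_add_mul (c : ℝ) {A : ℝ} (hA : 0 ≤ A) (x y : ℝ) :
    edist (c + A * x) (c + A * y) = ENNReal.ofReal A * edist x y := by
  rw [edist_dist, edist_dist, ← ENNReal.ofReal_mul hA, Real.dist_eq, Real.dist_eq,
    add_sub_add_left_eq_sub, ← mul_sub, abs_mul, abs_of_nonneg hA]

lemma eVariationOn_indicator_Ici_one_le (A p q : ℝ) :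
    eVariationOn ((Ici A).indicator (1 : ℝ → ℝ)) (Icc p q) ≤ 1 := by
  have h0 : ∀ x, 0 ≤ (Ici A).indicator (1 : ℝ → ℝ) x :=
    indicator_nonneg fun _ _ => zero_le_one
  have hmono : Monotone ((Ici A).indicator (1 : ℝ → ℝ)) := fun x y hxy => by
    by_cases hx : x ∈ Ici A
    · rw [indicator_of_mem hx, indicator_of_mem (mem_Ici.2 (le_trans hx hxy))]
      rfl
    · rw [indicator_of_notMem hx]
      exact h0 y
  rw [← univ_inter (Icc p q), (hmono.monotoneOn univ).eVariationOn_eq (mem_univ p) (mem_univ q)]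
  refine ENNReal.ofReal_le_of_le_toReal ?_
  have h1 : (Ici A).indicator (1 : ℝ → ℝ) q ≤ 1 :=
    indicator_le_self' (fun _ _ => zero_le_one) q
  rw [ENNReal.toReal_one]
  linarith [h0 p]

lemma eVariationOn_indicator_Ico_one_le_two {A B : ℝ} (hAB : A ≤ B) (p q : ℝ) :
    eVariationOn ((Ico A B).indicator (1 : ℝ → ℝ)) (Icc p q) ≤ 2 := by
  rw [← Ici_sdiff_Ici, indicator_sdiff (Ici_subset_Ici.2 hAB)]
  calc _ ≤ eVariationOn ((Ici A).indicator (1 : ℝ → ℝ)) (Icc p q)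
        + eVariationOn ((Ici B).indicator (1 : ℝ → ℝ)) (Icc p q) := eVariationOn_sub_le _ _ _
    _ ≤ 1 + 1 := add_le_add (eVariationOn_indicator_Ici_one_le _ _ _)
        (eVariationOn_indicator_Ici_one_le _ _ _)
    _ = 2 := one_add_one_eq_two

end Variation

section Cosine

open Real

lemma ofReal_two_mul_le_eVariationOn_cos (q : ℤ) (P : ℕ) :
    ENNReal.ofReal (2 * P) ≤ eVariationOn cos (Icc (q * π) ((q + P) * π)) := by
  set y : ℕ → ℝ := fun i => (q + (min i P : ℕ)) * π
  have hmono : Monotone y := fun i j hij => by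
    have : ((min i P : ℕ) : ℝ) ≤ (min j P : ℕ) := by exact_mod_cast min_le_min_right P hij
    simp only [y]
    gcongr
  have hmem : ∀ i, y i ∈ Icc (q * π) ((q + P) * π) := fun i => by
    have : ((min i P : ℕ) : ℝ) ≤ P := by exact_mod_cast min_le_right i P
    exact ⟨by simp only [y]; gcongr; simp, by simp only [y]; gcongr⟩
  have hstep : ∀ i ∈ Finset.range P, edist (cos (y (i + 1))) (cos (y i)) = ENNReal.ofReal 2 :=
    fun i hi => by
    have hiP := Finset.mem_range.1 hi
    have hy : y (i + 1) = y i + π := by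
      simp only [y, min_eq_left (Nat.succ_le_of_lt hiP), min_eq_left hiP.le]
      push_cast
      ring
    have hcos : |cos (y i)| = 1 := by
      simp only [y, min_eq_left hiP.le]
      rw [← Int.cast_natCast, ← Int.cast_add, cos_int_mul_pi, abs_neg_one_zpow]
    rw [hy, cos_add_pi, edist_dist, Real.dist_eq,
      show -cos (y i) - cos (y i) = -2 * cos (y i) by ring, abs_mul, hcos]
    norm_num
  calc ENNReal.ofReal (2 * P) = ∑ i ∈ Finset.range P, ENNReal.ofReal 2 := by
        rw [Finset.sum_const, Finset.card_range, nsmul_eq_mul, ← ENNReal.ofReal_natCast,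
          ← ENNReal.ofReal_mul (Nat.cast_nonneg P), mul_comm]
    _ = ∑ i ∈ Finset.range P, edist (cos (y (i + 1))) (cos (y i)) :=
        (Finset.sum_congr rfl hstep).symm
    _ ≤ _ := eVariationOn.sum_le hmono hmem

lemma ofReal_le_eVariationOn_cos_Ico (x ℓ : ℝ) :
    ENNReal.ofReal (2 * (ℓ / π - 2)) ≤ eVariationOn cos (Ico x (x + ℓ)) := by
  rcases lt_or_ge (ℓ / π) 2 with hℓ | hℓ
  · rw [ENNReal.ofReal_of_nonpos (by linarith)]
    exact bot_le
  have hπ := pi_pos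
  set q := ⌈x / π⌉
  set P := ⌊ℓ / π⌋₊ - 1
  have hfloor : 1 ≤ ⌊ℓ / π⌋₊ := Nat.le_floor (by push_cast; linarith)
  have hP : (P : ℝ) + 1 = ⌊ℓ / π⌋₊ := by
    simp only [P]
    rw [Nat.cast_sub hfloor]
    ring
  have hPlow : ℓ / π - 2 ≤ P := by linarith [Nat.lt_floor_add_one (ℓ / π)]
  have hPup : (P + 1) * π ≤ ℓ := (le_div_iff₀ hπ).1 (hP ▸ Nat.floor_le (by linarith))
  have hq : x ≤ q * π ∧ q * π < x + π := by
    constructor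
    · exact (div_le_iff₀ hπ).1 (Int.le_ceil _)
    · have := mul_lt_mul_of_pos_right (Int.ceil_lt_add_one (x / π)) hπ
      rwa [add_mul, div_mul_cancel₀ _ hπ.ne', one_mul] at this
  have hsub : Icc (q * π) ((q + P) * π) ⊆ Ico x (x + ℓ) := fun z hz =>
    ⟨hq.1.trans hz.1, by nlinarith [hz.2]⟩
  calc ENNReal.ofReal (2 * (ℓ / π - 2)) ≤ ENNReal.ofReal (2 * P) :=
        ENNReal.ofReal_le_ofReal (by linarith)
    _ ≤ _ := ofReal_two_mul_le_eVariationOn_cos q P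
    _ ≤ _ := eVariationOn.mono _ hsub

end Cosine

lemma strictMono_const_add_integral {g : ℝ → ℝ} (hg : Continuous g) (hpos : ∀ t, 0 < g t)
    (c : ℝ) : StrictMono fun x => c + ∫ t in (0:ℝ)..x, g t :=
  strictMono_of_deriv_pos fun x => by
    rw [deriv_const_add, Continuous.deriv_integral g hg 0 x]
    exact hpos x

section Branches

open Real

lemma integral_cos_two_pi_nat_mul {m : ℕ} (hm : m ≠ 0) :
    ∫ t in (0:ℝ)..1, cos (2 * π * m * t) = 0 := by
  rw [intervalIntegral.integral_comp_mul_left (fun t => cos t) (by positivity)]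
  simp only [mul_zero, mul_one, integral_cos, sin_zero, sub_zero, smul_eq_mul]
  rw [show 2 * π * m = (2 * m : ℕ) * π by push_cast; ring, sin_nat_mul_pi, mul_zero]

lemma integral_cos_four_pi_mul {n : ℕ} (hn : n ≠ 0) :
    ∫ t in (0:ℝ)..1, cos (4 * π * n ^ 4 * t) = 0 := by
  have h := integral_cos_two_pi_nat_mul (m := 2 * n ^ 4) (by positivity)
  push_cast at h
  simpa only [← mul_assoc, show (2 : ℝ) * π * 2 = 4 * π by ring] using h

variable (a : ℕ → ℝ)

lemma vd_eq (n : ℕ) (t : ℝ) : vd a n t = a n * (2 + cos (4 * π * n ^ 4 * t)) := by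
  rw [vd, cos_sq]
  ring_nf

lemma wd_eq (n : ℕ) (t : ℝ) : wd a n t = a n * (2 - cos (4 * π * n ^ 4 * t)) := by
  rw [wd, sin_sq, cos_sq]
  ring_nf

lemma b_succ (n : ℕ) : b a (n + 1) = b a n + 4 * a (n + 1) := by
  rw [b, b, Finset.sum_range_succ]
  ring

lemma v_succ_zero (n : ℕ) : v a (n + 1) 0 = b a n := by
  simp [v]

lemma w_succ_zero (n : ℕ) : w a (n + 1) 0 = b a n + 2 * a (n + 1) := by
  simp [w]

lemma v_succ_one (n : ℕ) : v a (n + 1) 1 = b a n + 2 * a (n + 1) := by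
  have hint : IntervalIntegrable (fun t => cos (4 * π * ((n + 1 : ℕ) : ℝ) ^ 4 * t))
      MeasureTheory.volume 0 1 := (by fun_prop : Continuous _).intervalIntegrable _ _
  simp only [v, vd_eq, Nat.add_sub_cancel, intervalIntegral.integral_const_mul,
    intervalIntegral.integral_add intervalIntegrable_const hint,
    integral_cos_four_pi_mul n.succ_ne_zero, intervalIntegral.integral_const, sub_zero, smul_eq_mul]
  ring

lemma w_succ_one (n : ℕ) : w a (n + 1) 1 = b a (n + 1) := by
  have hint : IntervalIntegrable (fun t => cos (4 * π * ((n + 1 : ℕ) : ℝ) ^ 4 * t))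
      MeasureTheory.volume 0 1 := (by fun_prop : Continuous _).intervalIntegrable _ _
  simp only [w, wd_eq, Nat.add_sub_cancel, intervalIntegral.integral_const_mul,
    intervalIntegral.integral_sub intervalIntegrable_const hint,
    integral_cos_four_pi_mul n.succ_ne_zero, intervalIntegral.integral_const, sub_zero, smul_eq_mul,
    b_succ]
  ring

variable {a}

lemma strictMono_v {n : ℕ} (hpos : 0 < a n) : StrictMono (v a n) :=
  strictMono_const_add_integral (by unfold vd; fun_prop) (fun t => by unfold vd; positivity) _

lemma strictMono_w {n : ℕ} (hpos : 0 < a n) : StrictMono (w a n) :=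
  strictMono_const_add_integral (by unfold wd; fun_prop) (fun t => by unfold wd; positivity) _

lemma ofReal_le_eVariationOn_vd {n : ℕ} (hn : n ≠ 0) (hpos : 0 ≤ a n) (x ℓ : ℝ) :
    ENNReal.ofReal (a n * (8 * n ^ 4 * ℓ - 4)) ≤ eVariationOn (vd a n) (Ico x (x + ℓ)) := by
  have hn' : (0:ℝ) < n := by exact_mod_cast Nat.pos_of_ne_zero hn
  have hω : 0 < 4 * π * n ^ 4 := by positivity
  have hvd : vd a n = (fun t => 2 * a n + a n * t) ∘ cos ∘ fun t => 4 * π * n ^ 4 * t := by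
    funext t
    simp only [Function.comp_apply, vd_eq]
    ring
  rw [hvd, eVariationOn_comp_of_edist_eq (edist_const_add_mul _ hpos),
    eVariationOn.comp_eq_of_monotoneOn _ _ ((monotone_mul_left_of_nonneg hω.le).monotoneOn _),
    image_mul_left_Ico hω, mul_add]
  calc ENNReal.ofReal (a n * (8 * n ^ 4 * ℓ - 4))
      = ENNReal.ofReal (a n) * ENNReal.ofReal (2 * (4 * π * n ^ 4 * ℓ / π - 2)) := by
        rw [← ENNReal.ofReal_mul hpos]
        congr 1
        field_simp
        ring
    _ ≤ _ := by
        gcongr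
        exact ofReal_le_eVariationOn_cos_Ico _ _

end Branches

section AffineBranches

variable {a : ℕ → ℝ} {N : ℕ}

lemma u_succ_apply (j : ℕ) (x : ℝ) :
    u a N (j + 1) x = binf a + j * (lenJ a / N) + lenJ a / N * x := by
  simp [u]

lemma u_one_apply (x : ℝ) : u a N 1 x = binf a + lenJ a / N * x := by
  simpa using u_succ_apply (a := a) (N := N) 0 x

lemma iterate_u_one_eq (m : ℕ) :
    (u a N 1)^[m] = fun x => (lenJ a / N) ^ m * x + (u a N 1)^[m] 0 := by
  induction m with
  | zero =>
    funext x
    simp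
  | succ m ih =>
    funext x
    rw [Function.iterate_succ_apply', Function.iterate_succ_apply' _ m 0, congrFun ih x,
      u_one_apply, u_one_apply]
    ring

lemma binf_add_natCast_mul_slope (hN : N ≠ 0) : binf a + N * (lenJ a / N) = 1 := by
  rw [mul_div_cancel₀ _ (by exact_mod_cast hN), lenJ]
  ring

end AffineBranches

-- The indicator of `v_{n+1}(u_1^K [0,1))`.
def cylIndicator (a : ℕ → ℝ) (N n K : ℕ) : ℝ → ℝ :=
  (Ico (v a (n + 1) ((u a N 1)^[K] 0)) (v a (n + 1) ((u a N 1)^[K] 1))).indicator 1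

namespace StdHyp

variable {a : ℕ → ℝ} {N : ℕ} (ha : StdHyp a)
include ha

lemma pos (n : ℕ) : 0 < a (n + 1) := ha.1 (n + 1) n.succ_pos

lemma monotone_b : Monotone (b a) :=
  monotone_nat_of_le_succ fun n => by linarith [b_succ a n, ha.pos n]

lemma b_nonneg (n : ℕ) : 0 ≤ b a n := by
  simpa [b] using ha.monotone_b (Nat.zero_le n)

lemma b_add_two_mul_lt (n : ℕ) : b a n + 2 * a (n + 1) < b a (n + 1) := by
  linarith [b_succ a n, ha.pos n]

lemma b_le_binf (n : ℕ) : b a n ≤ binf a := by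
  unfold b binf
  gcongr
  exact ha.2.1.sum_le_tsum _ fun i _ => (ha.pos i).le

lemma binf_lt_one : binf a < 1 := by
  unfold binf
  linarith [ha.2.2]

lemma Ico_b_subset (n : ℕ) : Ico (b a n) (b a (n + 1)) ⊆ Ico 0 (binf a) :=
  Ico_subset_Ico (ha.b_nonneg n) (ha.b_le_binf (n + 1))

lemma Ico_binf_subset : Ico (binf a) 1 ⊆ Ico (0:ℝ) 1 :=
  Ico_subset_Ico_left (ha.b_nonneg 0 |>.trans (ha.b_le_binf 0))

lemma v_mem_Ico (n : ℕ) {x : ℝ} (hx : x ∈ Ico (0:ℝ) 1) :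
    v a (n + 1) x ∈ Ico (b a n) (b a n + 2 * a (n + 1)) := by
  have hv := strictMono_v (ha.pos n)
  exact ⟨v_succ_zero a n ▸ hv.monotone hx.1, v_succ_one a n ▸ hv hx.2⟩

lemma w_mem_Ico (n : ℕ) {x : ℝ} (hx : x ∈ Ico (0:ℝ) 1) :
    w a (n + 1) x ∈ Ico (b a n + 2 * a (n + 1)) (b a (n + 1)) := by
  have hw := strictMono_w (ha.pos n)
  exact ⟨w_succ_zero a n ▸ hw.monotone hx.1, w_succ_one a n ▸ hw hx.2⟩

lemma v_mem_Ico_b (n : ℕ) {x : ℝ} (hx : x ∈ Ico (0:ℝ) 1) :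
    v a (n + 1) x ∈ Ico (b a n) (b a (n + 1)) :=
  Ico_subset_Ico_right (ha.b_add_two_mul_lt n).le (ha.v_mem_Ico n hx)

lemma w_mem_Ico_b (n : ℕ) {x : ℝ} (hx : x ∈ Ico (0:ℝ) 1) :
    w a (n + 1) x ∈ Ico (b a n) (b a (n + 1)) :=
  Ico_subset_Ico_left (by linarith [ha.pos n]) (ha.w_mem_Ico n hx)

lemma slope_pos (hN : 1 ≤ N) : 0 < lenJ a / N :=
  div_pos (by unfold lenJ; linarith [ha.binf_lt_one]) (by exact_mod_cast hN)

lemma u_mem_Ico {j : ℕ} (hj : j < N) {x : ℝ} (hx : x ∈ Ico (0:ℝ) 1) :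
    u a N (j + 1) x ∈ Ico (binf a + j * (lenJ a / N)) (binf a + (j + 1) * (lenJ a / N)) := by
  have hs := ha.slope_pos (N := N) (by omega)
  rw [u_succ_apply]
  constructor <;> nlinarith [hx.1, hx.2]

lemma u_mem_Ico_binf_one {j : ℕ} (hj : j < N) {x : ℝ} (hx : x ∈ Ico (0:ℝ) 1) :
    u a N (j + 1) x ∈ Ico (binf a) 1 := by
  have hs := ha.slope_pos (N := N) (by omega)
  have hNs := binf_add_natCast_mul_slope (a := a) (show N ≠ 0 by omega)
  have hj' : (j : ℝ) + 1 ≤ N := by exact_mod_cast hj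
  obtain ⟨h0, h1⟩ := ha.u_mem_Ico hj hx
  exact ⟨le_trans (by nlinarith [(Nat.cast_nonneg j : (0:ℝ) ≤ j)]) h0,
    h1.trans_le (by nlinarith)⟩

lemma LR_eqOn_of_eqOn {g g' : ℝ → ℝ} (h : EqOn g g' (Ico 0 1)) :
    EqOn (LR a N g) (LR a N g') (Ico 0 1) := by
  have hb : Ico 0 (binf a) ⊆ Ico (0:ℝ) 1 := Ico_subset_Ico_right ha.binf_lt_one.le
  intro x hx
  simp only [LR]
  congr 1
  · refine tsum_congr fun n => ?_
    rw [h (hb (ha.Ico_b_subset n (ha.v_mem_Ico_b n hx))),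
      h (hb (ha.Ico_b_subset n (ha.w_mem_Ico_b n hx)))]
  · exact congrArg _ (Finset.sum_congr rfl fun j hj =>
      h (ha.Ico_binf_subset (ha.u_mem_Ico_binf_one (Finset.mem_range.1 hj) hx)))

lemma LR_apply_of_eqOn_zero_off_v {n : ℕ} {g : ℝ → ℝ}
    (hg : EqOn g 0 (Ico 0 1 \ Ico (b a n) (b a n + 2 * a (n + 1)))) {x : ℝ}
    (hx : x ∈ Ico (0:ℝ) 1) : LR a N g x = vd a (n + 1) x * g (v a (n + 1) x) := by
  have hI : ∀ j, Ico (b a j) (b a (j + 1)) ⊆ Ico (0:ℝ) 1 := fun j =>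
    (ha.Ico_b_subset j).trans (Ico_subset_Ico_right ha.binf_lt_one.le)
  have hother : ∀ j ≠ n, ∀ y ∈ Ico (b a j) (b a (j + 1)), g y = 0 := by
    intro j hj y hy
    refine hg ⟨hI j hy, fun hy' => ?_⟩
    rcases lt_or_gt_of_ne hj with h | h
    · linarith [hy.2, hy'.1, ha.monotone_b (Nat.succ_le_of_lt h)]
    · linarith [hy.1, hy'.2, ha.monotone_b (Nat.succ_le_of_lt h), ha.b_add_two_mul_lt n]
  have hw : g (w a (n + 1) x) = 0 :=
    hg ⟨hI n (ha.w_mem_Ico_b n hx), fun h => (ha.w_mem_Ico n hx).1.not_gt h.2⟩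
  have hu : ∀ j ∈ Finset.range N, g (u a N (j + 1) x) = 0 := fun j hj => by
    have hu := ha.u_mem_Ico_binf_one (Finset.mem_range.1 hj) hx
    refine hg ⟨ha.Ico_binf_subset hu, fun h => ?_⟩
    linarith [h.2, hu.1, ha.b_le_binf (n + 1), ha.b_add_two_mul_lt n]
  rw [LR, tsum_eq_single n fun j hj => ?_, hw, Finset.sum_eq_zero hu]
  · ring
  · rw [hother j hj _ (ha.v_mem_Ico_b j hx), hother j hj _ (ha.w_mem_Ico_b j hx)]
    ring

section

variable (hN : 1 ≤ N)
include hN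

lemma LR_apply_of_eqOn_zero_off_u_one {g : ℝ → ℝ}
    (hg : EqOn g 0 (Ico 0 1 \ Ico (binf a) (binf a + lenJ a / N))) {x : ℝ}
    (hx : x ∈ Ico (0:ℝ) 1) : LR a N g x = lenJ a / N * g (u a N 1 x) := by
  have hleft : ∀ y ∈ Ico 0 (binf a), g y = 0 := fun y hy =>
    hg ⟨Ico_subset_Ico_right ha.binf_lt_one.le hy, fun h => hy.2.not_ge h.1⟩
  have hv : ∀ n, g (v a (n + 1) x) = 0 := fun n =>
    hleft _ (ha.Ico_b_subset n (ha.v_mem_Ico_b n hx))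
  have hw : ∀ n, g (w a (n + 1) x) = 0 := fun n =>
    hleft _ (ha.Ico_b_subset n (ha.w_mem_Ico_b n hx))
  have hu : ∀ j ∈ Finset.range N, j ≠ 0 → g (u a N (j + 1) x) = 0 := fun j hj hj0 => by
    have hjN := Finset.mem_range.1 hj
    have hu := ha.u_mem_Ico hjN hx
    refine hg ⟨ha.Ico_binf_subset (ha.u_mem_Ico_binf_one hjN hx), fun h => ?_⟩
    have : (1:ℝ) ≤ j := by exact_mod_cast Nat.one_le_iff_ne_zero.2 hj0
    nlinarith [h.2, hu.1, ha.slope_pos hN]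
  rw [LR, Finset.sum_eq_single_of_mem 0 (Finset.mem_range.2 hN) hu]
  simp [hv, hw]

lemma slope_le_one : lenJ a / N ≤ 1 := by
  have h1 := binf_add_natCast_mul_slope (a := a) (show N ≠ 0 by omega)
  have hN' : (1:ℝ) ≤ N := by exact_mod_cast hN
  nlinarith [ha.slope_pos hN, ha.b_nonneg 0, ha.b_le_binf 0]

lemma strictMono_u_one : StrictMono (u a N 1) := fun x y hxy => by
  have hs := ha.slope_pos hN
  simp only [u_one_apply]
  gcongr

lemma mapsTo_u_one : MapsTo (u a N 1) (Icc 0 1) (Icc 0 1) := fun x hx => by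
  have hs := ha.slope_pos hN
  have h1 := binf_add_natCast_mul_slope (a := a) (show N ≠ 0 by omega)
  have hN' : (1:ℝ) ≤ N := by exact_mod_cast hN
  rw [u_one_apply]
  exact ⟨by nlinarith [ha.b_le_binf 0, ha.b_nonneg 0, hx.1], by nlinarith [hx.2]⟩

lemma Ico_iterate_u_one_subset {j : ℕ} (hj : 1 ≤ j) :
    Ico ((u a N 1)^[j] 0) ((u a N 1)^[j] 1) ⊆ Ico (binf a) (binf a + lenJ a / N) := by
  obtain ⟨i, rfl⟩ := Nat.exists_eq_add_of_le' hj
  have hmaps := (ha.mapsTo_u_one hN).iterate i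
  have hψ := (ha.strictMono_u_one hN).monotone
  rw [Function.iterate_succ_apply', Function.iterate_succ_apply']
  refine Ico_subset_Ico ?_ ?_
  · simpa [u_one_apply] using hψ (hmaps (left_mem_Icc.2 zero_le_one)).1
  · simpa [u_one_apply] using hψ (hmaps (right_mem_Icc.2 zero_le_one)).2

lemma eqOn_LR_iterate_cylIndicator (n : ℕ) {K m : ℕ} (hm : m ≤ K) :
    EqOn ((LR a N)^[m + 1] (cylIndicator a N n K))
      ((Ico ((u a N 1)^[K - m] 0) ((u a N 1)^[K - m] 1)).indicator
        fun x => (lenJ a / N) ^ m * vd a (n + 1) ((u a N 1)^[m] x)) (Ico 0 1) := by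
  have hv := strictMono_v (ha.pos n)
  have hψ := ha.strictMono_u_one hN
  have hmaps := (ha.mapsTo_u_one hN).iterate K
  induction m with
  | zero =>
    intro x hx
    rw [Function.iterate_one, ha.LR_apply_of_eqOn_zero_off_v (n := n) ?_ hx]
    · simp only [cylIndicator, indicator_apply, mem_Ico, hv.le_iff_le, hv.lt_iff_lt,
        Nat.sub_zero, pow_zero, one_mul, Function.iterate_zero, id, Pi.one_apply]
      split_ifs <;> ring
    · intro y hy
      refine indicator_of_notMem (fun hy' => hy.2 (Ico_subset_Ico ?_ ?_ hy')) _
      · exact v_succ_zero a n ▸ hv.monotone (hmaps (left_mem_Icc.2 zero_le_one)).1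
      · exact v_succ_one a n ▸ hv.monotone (hmaps (right_mem_Icc.2 zero_le_one)).2
  | succ m ih =>
    intro x hx
    obtain ⟨j, hj⟩ : ∃ j, K - m = j + 1 := ⟨K - m - 1, by omega⟩
    rw [Function.iterate_succ_apply', ha.LR_eqOn_of_eqOn (ih (by omega)) hx,
      ha.LR_apply_of_eqOn_zero_off_u_one hN ?_ hx, hj, show K - (m + 1) = j by omega]
    · simp only [indicator_apply, Function.iterate_succ_apply' _ j, mem_Ico, hψ.le_iff_le,
        hψ.lt_iff_lt, ← Function.iterate_succ_apply (u a N 1) m x]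
      split_ifs <;> ring
    · exact fun y hy =>
        indicator_of_notMem (fun hy' => hy.2 (ha.Ico_iterate_u_one_subset hN (by omega) hy')) _

lemma eVariationOn_cylIndicator_le_two (n K : ℕ) :
    eVariationOn (cylIndicator a N n K) (Ico 0 1) ≤ 2 :=
  (eVariationOn.mono _ Ico_subset_Icc_self).trans <| eVariationOn_indicator_Ico_one_le_two
    ((strictMono_v (ha.pos n)).monotone
      (((ha.strictMono_u_one hN).iterate K).monotone zero_le_one)) 0 1

lemma ofReal_le_eVariationOn_LR_iterate (n K : ℕ) :
    ENNReal.ofReal ((lenJ a / N) ^ K *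
        (a (n + 1) * (8 * ((n + 1 : ℕ) : ℝ) ^ 4 * (lenJ a / N) ^ K - 4)))
      ≤ eVariationOn ((LR a N)^[K + 1] (cylIndicator a N n K)) (Ico 0 1) := by
  have hs := pow_pos (ha.slope_pos hN) K
  have h := ha.eqOn_LR_iterate_cylIndicator hN n (le_refl K)
  simp only [Nat.sub_self, Function.iterate_zero, id] at h
  rw [eVariationOn.eq_of_eqOn (h.trans eqOn_indicator)]
  have hcomp : (fun x => (lenJ a / N) ^ K * vd a (n + 1) ((u a N 1)^[K] x))
      = (fun t => 0 + (lenJ a / N) ^ K * t) ∘ vd a (n + 1) ∘ (u a N 1)^[K] := by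
    funext x
    simp
  rw [hcomp, eVariationOn_comp_of_edist_eq (edist_const_add_mul _ hs.le),
    eVariationOn.comp_eq_of_monotoneOn _ _
      (((ha.strictMono_u_one hN).iterate K).monotone.monotoneOn _),
    iterate_u_one_eq, image_affine_Ico hs, mul_zero, zero_add, mul_one,
    add_comm ((lenJ a / N) ^ K), ENNReal.ofReal_mul hs.le]
  gcongr
  exact ofReal_le_eVariationOn_vd n.succ_ne_zero (ha.pos n).le _ _

end

end StdHyp

/-- if `limsup n⁴ a_n = ∞`, then for every `k ≥ 1` the operator `L^k`
does not act continuously on bounded variation functions. -/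
theorem stmt2 (a : ℕ → ℝ) (N : ℕ) (hN : 1 ≤ N) (ha : StdHyp a)
    (hlim : ∀ C : ℝ, ∃ᶠ n : ℕ in atTop, C < (n : ℝ) ^ 4 * a n) :
    ∀ k : ℕ, 1 ≤ k → ∀ C : ℝ, 0 < C → ∃ f : ℝ → ℝ,
      eVariationOn f (Ico (0:ℝ) 1) ≤ 2 ∧
      (∀ x ∈ Ico (0:ℝ) 1, |f x| ≤ 1) ∧
      ENNReal.ofReal C < eVariationOn ((LR a N)^[k] f) (Ico (0:ℝ) 1) := by
  intro k hk C hC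
  obtain ⟨K, rfl⟩ := Nat.exists_eq_add_of_le' hk
  set r := (lenJ a / N) ^ K
  have hr : 0 < r := pow_pos (ha.slope_pos hN) K
  have hr1 : r ≤ 1 := pow_le_one₀ (ha.slope_pos hN).le (ha.slope_le_one hN)
  obtain ⟨n, hnC, hn⟩ :=
    ((hlim ((C + 1) / (8 * r ^ 2))).and_eventually (eventually_ge_atTop 1)).exists
  obtain ⟨m, rfl⟩ := Nat.exists_eq_add_of_le' hn
  have ha4 : 4 * a (m + 1) < 1 := by
    linarith [b_succ a m, ha.b_nonneg m, ha.b_le_binf (m + 1), ha.binf_lt_one]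
  have hgain : C < r * (a (m + 1) * (8 * ((m + 1 : ℕ) : ℝ) ^ 4 * r - 4)) := by
    rw [div_lt_iff₀ (by positivity)] at hnC
    nlinarith [ha.pos m]
  refine ⟨cylIndicator a N m K, ha.eVariationOn_cylIndicator_le_two hN m K, fun x _ => ?_,
    ((ENNReal.ofReal_lt_ofReal_iff (hC.trans hgain)).2 hgain).trans_le
      (ha.ofReal_le_eVariationOn_LR_iterate hN m K)⟩
  unfold cylIndicator indicator
  split_ifs <;> norm_num

end Gouezel
end
end

section
/- Take a_n = 1/(100 n³) and let N ≥ 4 be an integer. Then the transfer operator L satisfies the Lasota–Yorke inequality ‖L f‖_Lip ≤ (3/4) ‖f‖_Lip + ‖f‖_{C⁰} for every bounded Lipschitz function f : [0,1) → ℂ. -/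
open MeasureTheory Set Filter

noncomputable section

namespace Gouezel

/-
The weights of `L` sum to one (`v_n' + w_n' = 4 a_n` and `4 ∑ a_n + |J| = 1`), which gives the
sup bound. Since `v_n' + w_n'` is constant,
`L_n f(x) - L_n f(y) = (v_n'(x) - v_n'(y)) (f(v_n x) - f(w_n x))`
`  + v_n'(y) (f(v_n x) - f(v_n y)) + w_n'(y) (f(w_n x) - f(w_n y))`.
The weight `v_n'` oscillates fast (Lipschitz constant `4π n⁴ a_n`), but it only multiplies
`f(v_n x) - f(w_n x) = O(a_n Lip f)`, the two branches being `O(a_n)` apart. So the `n`-th pair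
contributes `(20π n⁴ + 18) a_n² Lip f ≤ Lip f / (50 n²)`, all pairs together at most
`Lip f / 25`, and the affine branches contribute `|J|² / N · Lip f ≤ Lip f / 2`.
-/

open Real

section Branches

variable {a : ℕ → ℝ} {n : ℕ}

theorem vd_add_wd (a : ℕ → ℝ) (n : ℕ) (x : ℝ) : vd a n x + wd a n x = 4 * a n := by
  rw [vd, wd]
  linear_combination (2 * a n) * sin_sq_add_cos_sq (2 * π * (n : ℝ) ^ 4 * x)

theorem le_vd (ha : 0 ≤ a n) (x : ℝ) : a n ≤ vd a n x := by
  rw [vd]; nlinarith [sq_nonneg (cos (2 * π * (n : ℝ) ^ 4 * x))]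

theorem vd_le (ha : 0 ≤ a n) (x : ℝ) : vd a n x ≤ 3 * a n := by
  rw [vd]; nlinarith [cos_sq_le_one (2 * π * (n : ℝ) ^ 4 * x)]

theorem le_wd (ha : 0 ≤ a n) (x : ℝ) : a n ≤ wd a n x := by
  rw [wd]; nlinarith [sq_nonneg (sin (2 * π * (n : ℝ) ^ 4 * x))]

theorem wd_le (ha : 0 ≤ a n) (x : ℝ) : wd a n x ≤ 3 * a n := by
  rw [wd]; nlinarith [sin_sq_le_one (2 * π * (n : ℝ) ^ 4 * x)]

theorem abs_vd_sub_vd_le (ha : 0 ≤ a n) (x y : ℝ) :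
    |vd a n x - vd a n y| ≤ 4 * π * n ^ 4 * a n * |x - y| := by
  set c := 2 * π * (n : ℝ) ^ 4
  have h : vd a n x - vd a n y = a n * (cos (2 * (c * x)) - cos (2 * (c * y))) := by
    simp only [vd, cos_sq]; ring
  calc |vd a n x - vd a n y| = a n * |cos (2 * (c * x)) - cos (2 * (c * y))| := by
        rw [h, abs_mul, abs_of_nonneg ha]
    _ ≤ a n * |2 * (c * x) - 2 * (c * y)| := mul_le_mul_of_nonneg_left (abs_cos_sub_cos_le _ _) ha
    _ = 4 * π * n ^ 4 * a n * |x - y| := by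
        rw [← mul_sub, ← mul_sub, abs_mul, abs_mul, abs_two, abs_of_nonneg (by positivity : 0 ≤ c)]
        ring

theorem continuous_vd (a : ℕ → ℝ) (n : ℕ) : Continuous (vd a n) := by
  unfold vd; fun_prop

theorem continuous_wd (a : ℕ → ℝ) (n : ℕ) : Continuous (wd a n) := by
  unfold wd; fun_prop

theorem v_sub_v (a : ℕ → ℝ) (n : ℕ) (x y : ℝ) : v a n x - v a n y = ∫ t in y..x, vd a n t := by
  rw [v, v, add_sub_add_left_eq_sub, intervalIntegral.integral_interval_sub_left
    ((continuous_vd a n).intervalIntegrable _ _) ((continuous_vd a n).intervalIntegrable _ _)]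

theorem w_sub_w (a : ℕ → ℝ) (n : ℕ) (x y : ℝ) : w a n x - w a n y = ∫ t in y..x, wd a n t := by
  rw [w, w, add_sub_add_left_eq_sub, intervalIntegral.integral_interval_sub_left
    ((continuous_wd a n).intervalIntegrable _ _) ((continuous_wd a n).intervalIntegrable _ _)]

theorem abs_v_sub_v_le (ha : 0 ≤ a n) (x y : ℝ) : |v a n x - v a n y| ≤ 3 * a n * |x - y| := by
  rw [v_sub_v, ← Real.norm_eq_abs]
  refine intervalIntegral.norm_integral_le_of_norm_le_const fun t _ => ?_
  rw [Real.norm_eq_abs, abs_of_nonneg (ha.trans (le_vd ha t))]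
  exact vd_le ha t

theorem abs_w_sub_w_le (ha : 0 ≤ a n) (x y : ℝ) : |w a n x - w a n y| ≤ 3 * a n * |x - y| := by
  rw [w_sub_w, ← Real.norm_eq_abs]
  refine intervalIntegral.norm_integral_le_of_norm_le_const fun t _ => ?_
  rw [Real.norm_eq_abs, abs_of_nonneg (ha.trans (le_wd ha t))]
  exact wd_le ha t

theorem v_mem_Icc (ha : 0 ≤ a n) {x : ℝ} (hx : 0 ≤ x) :
    v a n x ∈ Icc (b a (n - 1)) (b a (n - 1) + 3 * a n * x) := by
  have hmono : 0 ≤ v a n x - v a n 0 := by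
    rw [v_sub_v]; exact intervalIntegral.integral_nonneg hx fun t _ => ha.trans (le_vd ha t)
  have hlip := abs_v_sub_v_le ha x 0
  have hv0 : v a n 0 = b a (n - 1) := by simp [v]
  rw [hv0] at hmono hlip
  rw [sub_zero, abs_of_nonneg hx, abs_of_nonneg hmono] at hlip
  constructor <;> linarith

theorem w_mem_Icc (ha : 0 ≤ a n) {x : ℝ} (hx : 0 ≤ x) :
    w a n x ∈ Icc (b a (n - 1) + 2 * a n) (b a (n - 1) + 2 * a n + 3 * a n * x) := by
  have hmono : 0 ≤ w a n x - w a n 0 := by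
    rw [w_sub_w]; exact intervalIntegral.integral_nonneg hx fun t _ => ha.trans (le_wd ha t)
  have hlip := abs_w_sub_w_le ha x 0
  have hw0 : w a n 0 = b a (n - 1) + 2 * a n := by simp [w]
  rw [hw0] at hmono hlip
  rw [sub_zero, abs_of_nonneg hx, abs_of_nonneg hmono] at hlip
  constructor <;> linarith

theorem abs_v_sub_w_le (ha : 0 ≤ a n) {x : ℝ} (hx : x ∈ Icc (0 : ℝ) 1) :
    |v a n x - w a n x| ≤ 5 * a n := by
  obtain ⟨hv₁, hv₂⟩ := v_mem_Icc ha hx.1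
  obtain ⟨hw₁, hw₂⟩ := w_mem_Icc ha hx.1
  have : a n * x ≤ a n := mul_le_of_le_one_right ha hx.2
  rw [abs_le]; constructor <;> linarith

theorem u_sub_u (a : ℕ → ℝ) (N j : ℕ) (x y : ℝ) :
    u a N j x - u a N j y = lenJ a / N * (x - y) := by
  simp only [u]; ring

theorem u_mem_Ico (hb : 0 ≤ binf a) (hJ : 0 < lenJ a) {N j : ℕ} (hj : j < N) {x : ℝ}
    (hx : x ∈ Ico (0 : ℝ) 1) : u a N (j + 1) x ∈ Ico (0 : ℝ) 1 := by
  have hN : (0 : ℝ) < N := by exact_mod_cast j.zero_le.trans_lt hj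
  have hjN : (j : ℝ) + 1 ≤ N := by exact_mod_cast hj
  set q := lenJ a / N
  have hq : 0 < q := div_pos hJ hN
  have hNq : N * q = lenJ a := mul_div_cancel₀ _ hN.ne'
  have hu : u a N (j + 1) x = binf a + (j + x) * q := by simp only [u, q]; push_cast; ring
  have hjq : (j + x) * q < N * q := by
    apply mul_lt_mul_of_pos_right _ hq; linarith [hx.2]
  rw [hu]
  constructor
  · have := hx.1; positivity
  · rw [lenJ] at hNq; linarith

end Branches

section BranchPair

variable {a : ℕ → ℝ} {n : ℕ} {f : ℝ → ℂ} {S K x y : ℝ}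

theorem norm_Ln_le (ha : 0 ≤ a n) (hv : MapsTo (v a n) (Ico 0 1) (Ico 0 1))
    (hw : MapsTo (w a n) (Ico 0 1) (Ico 0 1)) (hS : ∀ z ∈ Ico (0 : ℝ) 1, ‖f z‖ ≤ S)
    (hx : x ∈ Ico (0 : ℝ) 1) : ‖Ln a n f x‖ ≤ 4 * a n * S := by
  have hvd := ha.trans (le_vd ha x)
  have hwd := ha.trans (le_wd ha x)
  calc ‖Ln a n f x‖ ≤ vd a n x * S + wd a n x * S := by
        refine (norm_add_le _ _).trans (add_le_add ?_ ?_) <;>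
          rw [norm_mul, Complex.norm_real, Real.norm_of_nonneg ‹_›]
        · exact mul_le_mul_of_nonneg_left (hS _ (hv hx)) hvd
        · exact mul_le_mul_of_nonneg_left (hS _ (hw hx)) hwd
    _ = 4 * a n * S := by rw [← add_mul, vd_add_wd]

theorem Ln_sub_Ln (a : ℕ → ℝ) (n : ℕ) (f : ℝ → ℂ) (x y : ℝ) :
    Ln a n f x - Ln a n f y =
      ((vd a n x - vd a n y : ℝ) : ℂ) * (f (v a n x) - f (w a n x))
        + (vd a n y : ℂ) * (f (v a n x) - f (v a n y))
        + (wd a n y : ℂ) * (f (w a n x) - f (w a n y)) := by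
  have hwx : wd a n x = 4 * a n - vd a n x := by linarith [vd_add_wd a n x]
  have hwy : wd a n y = 4 * a n - vd a n y := by linarith [vd_add_wd a n y]
  rw [Ln, Ln, hwx, hwy]; push_cast; ring

theorem norm_Ln_sub_Ln_le (ha : 0 ≤ a n) (hv : MapsTo (v a n) (Ico 0 1) (Ico 0 1))
    (hw : MapsTo (w a n) (Ico 0 1) (Ico 0 1)) (hK0 : 0 ≤ K)
    (hK : ∀ s ∈ Ico (0 : ℝ) 1, ∀ t ∈ Ico (0 : ℝ) 1, ‖f s - f t‖ ≤ K * |s - t|)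
    (hx : x ∈ Ico (0 : ℝ) 1) (hy : y ∈ Ico (0 : ℝ) 1) :
    ‖Ln a n f x - Ln a n f y‖ ≤ (20 * π * n ^ 4 + 18) * a n ^ 2 * (K * |x - y|) := by
  have hvw : ‖f (v a n x) - f (w a n x)‖ ≤ K * (5 * a n) :=
    (hK _ (hv hx) _ (hw hx)).trans
      (mul_le_mul_of_nonneg_left (abs_v_sub_w_le ha (Ico_subset_Icc_self hx)) hK0)
  have hvv : ‖f (v a n x) - f (v a n y)‖ ≤ K * (3 * a n * |x - y|) :=
    (hK _ (hv hx) _ (hv hy)).trans (mul_le_mul_of_nonneg_left (abs_v_sub_v_le ha x y) hK0)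
  have hww : ‖f (w a n x) - f (w a n y)‖ ≤ K * (3 * a n * |x - y|) :=
    (hK _ (hw hx) _ (hw hy)).trans (mul_le_mul_of_nonneg_left (abs_w_sub_w_le ha x y) hK0)
  have hvd : ‖(vd a n y : ℂ)‖ ≤ 3 * a n := by
    rw [Complex.norm_real, Real.norm_of_nonneg (ha.trans (le_vd ha y))]; exact vd_le ha y
  have hwd : ‖(wd a n y : ℂ)‖ ≤ 3 * a n := by
    rw [Complex.norm_real, Real.norm_of_nonneg (ha.trans (le_wd ha y))]; exact wd_le ha y
  rw [Ln_sub_Ln]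
  calc _ ≤ |vd a n x - vd a n y| * ‖f (v a n x) - f (w a n x)‖
        + ‖(vd a n y : ℂ)‖ * ‖f (v a n x) - f (v a n y)‖
        + ‖(wd a n y : ℂ)‖ * ‖f (w a n x) - f (w a n y)‖ := by
        refine norm_add₃_le.trans (le_of_eq ?_)
        rw [norm_mul, norm_mul, norm_mul, Complex.norm_real, Real.norm_eq_abs]
    _ ≤ 4 * π * n ^ 4 * a n * |x - y| * (K * (5 * a n))
        + 3 * a n * (K * (3 * a n * |x - y|)) + 3 * a n * (K * (3 * a n * |x - y|)) := by
        gcongr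
        exact abs_vd_sub_vd_le ha x y
    _ = (20 * π * n ^ 4 + 18) * a n ^ 2 * (K * |x - y|) := by ring

end BranchPair

section SpecificSequence

theorem aa_pos {n : ℕ} (hn : 0 < n) : 0 < aa n := by
  unfold aa; positivity

-- The `n = 0` term of `hasSum_zeta_two` is `1 / 0 ^ 2 = 0`, so shifting the index is free.
theorem hasSum_one_div_succ_sq : HasSum (fun n : ℕ => 1 / ((n : ℝ) + 1) ^ 2) (π ^ 2 / 6) := by
  simpa using (hasSum_nat_add_iff' 1).mpr hasSum_zeta_two

theorem pi_sq_div_six_le_two : π ^ 2 / 6 ≤ 2 := by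
  nlinarith [pi_lt_d2, pi_pos]

theorem aa_succ_le (n : ℕ) : aa (n + 1) ≤ 1 / 100 * (1 / ((n : ℝ) + 1) ^ 2) := by
  have hn : (1 : ℝ) ≤ n + 1 := by linarith [n.cast_nonneg (α := ℝ)]
  rw [aa, ← one_div_mul_one_div]
  push_cast
  gcongr
  norm_num

theorem summable_aa_succ : Summable fun n : ℕ => aa (n + 1) :=
  .of_nonneg_of_le (fun n => (aa_pos n.succ_pos).le) aa_succ_le
    (hasSum_one_div_succ_sq.summable.mul_left _)

theorem tsum_aa_succ_le : ∑' n : ℕ, aa (n + 1) ≤ 1 / 50 := by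
  calc ∑' n : ℕ, aa (n + 1) ≤ 1 / 100 * (π ^ 2 / 6) :=
        hasSum_le aa_succ_le summable_aa_succ.hasSum (hasSum_one_div_succ_sq.mul_left _)
    _ ≤ 1 / 50 := by linarith [pi_sq_div_six_le_two]

theorem b_aa_nonneg (n : ℕ) : 0 ≤ b aa n := by
  unfold b
  have := Finset.sum_nonneg fun k (_ : k ∈ Finset.range n) => (aa_pos k.succ_pos).le
  linarith

theorem b_aa_le_binf (n : ℕ) : b aa n ≤ binf aa := by
  unfold b binf
  gcongr
  exact summable_aa_succ.sum_le_tsum _ fun k _ => (aa_pos k.succ_pos).le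

theorem binf_aa_le : binf aa ≤ 2 / 25 := by
  unfold binf; linarith [tsum_aa_succ_le]

theorem binf_aa_nonneg : 0 ≤ binf aa :=
  (b_aa_nonneg 0).trans (b_aa_le_binf 0)

theorem lenJ_aa_pos : 0 < lenJ aa := by
  unfold lenJ; linarith [binf_aa_le]

theorem lenJ_aa_le_one : lenJ aa ≤ 1 := by
  unfold lenJ; linarith [binf_aa_nonneg]

theorem aa_le {n : ℕ} (hn : 0 < n) : aa n ≤ 1 / 100 := by
  have : (1 : ℝ) ≤ (n : ℝ) ^ 3 := one_le_pow₀ (by exact_mod_cast hn)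
  unfold aa; gcongr; linarith

theorem mapsTo_v_aa {n : ℕ} (hn : 0 < n) : MapsTo (v aa n) (Ico 0 1) (Ico 0 1) := by
  intro x hx
  obtain ⟨h₁, h₂⟩ := v_mem_Icc (aa_pos hn).le hx.1
  have : aa n * x ≤ aa n := mul_le_of_le_one_right (aa_pos hn).le hx.2.le
  have := (b_aa_le_binf (n - 1)).trans binf_aa_le
  exact ⟨(b_aa_nonneg _).trans h₁, by linarith [aa_le hn]⟩

theorem mapsTo_w_aa {n : ℕ} (hn : 0 < n) : MapsTo (w aa n) (Ico 0 1) (Ico 0 1) := by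
  intro x hx
  obtain ⟨h₁, h₂⟩ := w_mem_Icc (aa_pos hn).le hx.1
  have : aa n * x ≤ aa n := mul_le_of_le_one_right (aa_pos hn).le hx.2.le
  have := (b_aa_le_binf (n - 1)).trans binf_aa_le
  exact ⟨by linarith [b_aa_nonneg (n - 1), aa_pos hn], by linarith [aa_le hn]⟩

theorem oscillation_mul_sq_aa_le (n : ℕ) :
    (20 * π * ((n + 1 : ℕ) : ℝ) ^ 4 + 18) * aa (n + 1) ^ 2
      ≤ 1 / 50 * (1 / ((n : ℝ) + 1) ^ 2) := by
  rw [aa, Nat.cast_succ]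
  set m : ℝ := n + 1
  have hm4 : 1 ≤ m ^ 4 := one_le_pow₀ (by simp [m])
  calc _ = (20 * π * m ^ 4 + 18) * (1 / (10000 * m ^ 6)) := by field_simp; ring
    _ ≤ 200 * m ^ 4 * (1 / (10000 * m ^ 6)) := by gcongr; nlinarith [pi_lt_d2]
    _ = 1 / 50 * (1 / m ^ 2) := by field_simp; norm_num

end SpecificSequence

section TransferOperator

variable {N : ℕ} {f : ℝ → ℂ} {S K x y : ℝ}

theorem L_eq (a : ℕ → ℝ) (N : ℕ) (f : ℝ → ℂ) (x : ℝ) :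
    L a N f x = ∑' n : ℕ, Ln a (n + 1) f x
      + ((lenJ a / N : ℝ) : ℂ) * ∑ j ∈ Finset.range N, f (u a N (j + 1) x) :=
  rfl

theorem norm_ofReal_div_mul_sum_le {c B : ℝ} (hc : 0 ≤ c) (hB : 0 ≤ B) {g : ℕ → ℂ}
    (hg : ∀ j < N, ‖g j‖ ≤ B) : ‖((c / N : ℝ) : ℂ) * ∑ j ∈ Finset.range N, g j‖ ≤ c * B := by
  rcases N.eq_zero_or_pos with rfl | hN
  · simpa using mul_nonneg hc hB
  have hN' : (0 : ℝ) < N := by exact_mod_cast hN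
  calc ‖((c / N : ℝ) : ℂ) * ∑ j ∈ Finset.range N, g j‖ ≤ c / N * ∑ _j ∈ Finset.range N, B := by
        rw [norm_mul, Complex.norm_real, Real.norm_of_nonneg (by positivity)]
        gcongr
        exact norm_sum_le_of_le _ fun j hj => hg j (Finset.mem_range.mp hj)
    _ = c * B := by
        rw [Finset.sum_const, Finset.card_range, nsmul_eq_mul]; field_simp

theorem summable_Ln_aa (hS : ∀ z ∈ Ico (0 : ℝ) 1, ‖f z‖ ≤ S) (hx : x ∈ Ico (0 : ℝ) 1) :
    Summable fun n : ℕ => Ln aa (n + 1) f x :=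
  .of_norm_bounded ((summable_aa_succ.mul_left 4).mul_right S) fun n =>
    norm_Ln_le (aa_pos n.succ_pos).le (mapsTo_v_aa n.succ_pos) (mapsTo_w_aa n.succ_pos) hS hx

theorem norm_tsum_Ln_aa_le (hS : ∀ z ∈ Ico (0 : ℝ) 1, ‖f z‖ ≤ S) (hx : x ∈ Ico (0 : ℝ) 1) :
    ‖∑' n : ℕ, Ln aa (n + 1) f x‖ ≤ binf aa * S :=
  tsum_of_norm_bounded ((summable_aa_succ.hasSum.mul_left 4).mul_right S) fun n =>
    norm_Ln_le (aa_pos n.succ_pos).le (mapsTo_v_aa n.succ_pos) (mapsTo_w_aa n.succ_pos) hS hx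

theorem norm_tsum_Ln_aa_sub_le (hS : ∀ z ∈ Ico (0 : ℝ) 1, ‖f z‖ ≤ S) (hK0 : 0 ≤ K)
    (hK : ∀ s ∈ Ico (0 : ℝ) 1, ∀ t ∈ Ico (0 : ℝ) 1, ‖f s - f t‖ ≤ K * |s - t|)
    (hx : x ∈ Ico (0 : ℝ) 1) (hy : y ∈ Ico (0 : ℝ) 1) :
    ‖∑' n : ℕ, Ln aa (n + 1) f x - ∑' n : ℕ, Ln aa (n + 1) f y‖ ≤ K * |x - y| / 25 := by
  have hKxy : 0 ≤ K * |x - y| := by positivity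
  rw [← (summable_Ln_aa hS hx).tsum_sub (summable_Ln_aa hS hy)]
  calc _ ≤ K * |x - y| / 50 * (π ^ 2 / 6) :=
        tsum_of_norm_bounded (hasSum_one_div_succ_sq.mul_left _) fun n => by
          refine (norm_Ln_sub_Ln_le (aa_pos n.succ_pos).le (mapsTo_v_aa n.succ_pos)
            (mapsTo_w_aa n.succ_pos) hK0 hK hx hy).trans ?_
          have := mul_le_mul_of_nonneg_right (oscillation_mul_sq_aa_le n) hKxy
          linarith
    _ ≤ K * |x - y| / 25 := by nlinarith [pi_sq_div_six_le_two]

theorem norm_L_aa_le (hS : ∀ z ∈ Ico (0 : ℝ) 1, ‖f z‖ ≤ S) (hx : x ∈ Ico (0 : ℝ) 1) :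
    ‖L aa N f x‖ ≤ S := by
  have hS0 : 0 ≤ S := (norm_nonneg _).trans (hS 0 ⟨le_rfl, zero_lt_one⟩)
  rw [L_eq]
  calc _ ≤ binf aa * S + lenJ aa * S :=
        norm_add_le_of_le (norm_tsum_Ln_aa_le hS hx) <| norm_ofReal_div_mul_sum_le
          lenJ_aa_pos.le hS0 fun j hj => hS _ (u_mem_Ico binf_aa_nonneg lenJ_aa_pos hj hx)
    _ = S := by rw [lenJ]; ring

theorem norm_L_aa_sub_le (hN : 2 ≤ N) (hS : ∀ z ∈ Ico (0 : ℝ) 1, ‖f z‖ ≤ S) (hK0 : 0 ≤ K)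
    (hK : ∀ s ∈ Ico (0 : ℝ) 1, ∀ t ∈ Ico (0 : ℝ) 1, ‖f s - f t‖ ≤ K * |s - t|)
    (hx : x ∈ Ico (0 : ℝ) 1) (hy : y ∈ Ico (0 : ℝ) 1) :
    ‖L aa N f x - L aa N f y‖ ≤ 3 / 4 * K * |x - y| := by
  have hJ := lenJ_aa_pos
  have hKxy : 0 ≤ K * |x - y| := by positivity
  have hu : ∀ j < N, ‖f (u aa N (j + 1) x) - f (u aa N (j + 1) y)‖ ≤ K * (lenJ aa / N * |x - y|) :=
    fun j hj => by
      have := hK _ (u_mem_Ico binf_aa_nonneg hJ hj hx) _ (u_mem_Ico binf_aa_nonneg hJ hj hy)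
      rwa [u_sub_u, abs_mul, abs_of_nonneg (by positivity)] at this
  have hJN : lenJ aa * (lenJ aa / N) ≤ 1 / 2 := by
    have hN' : (2 : ℝ) ≤ N := by exact_mod_cast hN
    rw [mul_div_assoc', div_le_iff₀ (by linarith)]
    nlinarith [lenJ_aa_le_one]
  rw [L_eq, L_eq, add_sub_add_comm, ← mul_sub, ← Finset.sum_sub_distrib]
  calc _ ≤ K * |x - y| / 25 + lenJ aa * (K * (lenJ aa / N * |x - y|)) :=
        norm_add_le_of_le (norm_tsum_Ln_aa_sub_le hS hK0 hK hx hy)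
          (norm_ofReal_div_mul_sum_le hJ.le (by positivity) hu)
    _ = K * |x - y| / 25 + lenJ aa * (lenJ aa / N) * (K * |x - y|) := by ring
    _ ≤ 3 / 4 * K * |x - y| := by nlinarith

end TransferOperator

section LipschitzNorm

variable {f g : ℝ → ℂ} {S K x y : ℝ}

instance : Nonempty (Ico (0 : ℝ) 1) := ⟨⟨0, le_rfl, zero_lt_one⟩⟩

theorem supNorm_le (h : ∀ x ∈ Ico (0 : ℝ) 1, ‖g x‖ ≤ S) : supNorm g ≤ S :=
  ciSup_le fun x => h x x.2

theorem lipConst_le (hK0 : 0 ≤ K)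
    (h : ∀ x ∈ Ico (0 : ℝ) 1, ∀ y ∈ Ico (0 : ℝ) 1, ‖g x - g y‖ ≤ K * |x - y|) :
    lipConst g ≤ K :=
  ciSup_le fun p => div_le_of_le_mul₀ (abs_nonneg _) hK0 (h _ p.1.2 _ p.2.2)

theorem BddLip.norm_le_supNorm (hf : BddLip f) (hx : x ∈ Ico (0 : ℝ) 1) : ‖f x‖ ≤ supNorm f := by
  obtain ⟨K, hK, -⟩ := hf
  refine le_ciSup (f := fun z : Ico (0 : ℝ) 1 => ‖f z‖) ⟨K, ?_⟩ ⟨x, hx⟩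
  rintro _ ⟨z, rfl⟩
  exact hK z z.2

theorem BddLip.supNorm_nonneg (hf : BddLip f) : 0 ≤ supNorm f :=
  (norm_nonneg _).trans (hf.norm_le_supNorm ⟨le_rfl, zero_lt_one⟩)

theorem BddLip.bddAbove_lipConst (hf : BddLip f) :
    BddAbove (range fun p : Ico (0 : ℝ) 1 × Ico (0 : ℝ) 1 =>
      ‖f p.1.1 - f p.2.1‖ / |p.1.1 - p.2.1|) := by
  obtain ⟨K, hK, hL⟩ := hf
  refine ⟨K, ?_⟩
  rintro _ ⟨p, rfl⟩
  exact div_le_of_le_mul₀ (abs_nonneg _) ((norm_nonneg _).trans (hK _ p.1.2))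
    (hL _ p.1.2 _ p.2.2)

theorem BddLip.lipConst_nonneg (hf : BddLip f) : 0 ≤ lipConst f := by
  have h0 : (0 : ℝ) ∈ Ico (0 : ℝ) 1 := ⟨le_rfl, zero_lt_one⟩
  simpa [lipConst] using le_ciSup hf.bddAbove_lipConst (⟨0, h0⟩, ⟨0, h0⟩)

theorem BddLip.norm_sub_le_lipConst (hf : BddLip f) (hx : x ∈ Ico (0 : ℝ) 1)
    (hy : y ∈ Ico (0 : ℝ) 1) : ‖f x - f y‖ ≤ lipConst f * |x - y| := by
  rcases eq_or_ne x y with rfl | hxy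
  · simp
  · exact (div_le_iff₀ (abs_pos.mpr (sub_ne_zero.mpr hxy))).mp
      (le_ciSup hf.bddAbove_lipConst ⟨⟨x, hx⟩, ⟨y, hy⟩⟩)

end LipschitzNorm

/-- with `a_n = 1/(100 n³)` and `N ≥ 4`, the Lasota–Yorke inequality
`‖L f‖_Lip ≤ (3/4) ‖f‖_Lip + ‖f‖_{C⁰}` holds for every bounded Lipschitz `f`. -/
theorem stmt10 (N : ℕ) (hN : 4 ≤ N) (f : ℝ → ℂ) (hf : BddLip f) :
    lipNorm (L aa N f) ≤ (3 / 4) * lipNorm f + supNorm f := by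
  have hS : ∀ x ∈ Ico (0 : ℝ) 1, ‖f x‖ ≤ supNorm f := fun x => hf.norm_le_supNorm
  have hK : ∀ x ∈ Ico (0 : ℝ) 1, ∀ y ∈ Ico (0 : ℝ) 1, ‖f x - f y‖ ≤ lipConst f * |x - y| :=
    fun x hx y => hf.norm_sub_le_lipConst hx
  have hsup : supNorm (L aa N f) ≤ supNorm f := supNorm_le fun x hx => norm_L_aa_le hS hx
  have hlip : lipConst (L aa N f) ≤ 3 / 4 * lipConst f :=
    lipConst_le (by linarith [hf.lipConst_nonneg]) fun x hx y hy =>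
      norm_L_aa_sub_le (by omega) hS hf.lipConst_nonneg hK hx hy
  unfold lipNorm
  linarith [hf.supNorm_nonneg]

end Gouezel
end
end
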